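/- If a regular finite non-negative Borel measure μ on a coset π⁻¹({γ̃}) of a closed subgroup Λ in Γ is such that the constant functions are dense in L^α(μ) for some α ∈ (0,∞), then μ is a non-negative multiple of a Dirac measure δ_γ for some γ in that coset. -/

import Mathlib

open MeasureTheory Set

/-- A finite non-negative Borel measure is *regular* (in the sense of the paper) if every
Borel set can be approximated from inside by compact sets and from outside by open sets. -/
def PaperRegular {X : Type*} [TopologicalSpace X] [MeasurableSpace X]
    (μ : Measure X) : Prop :=
  ∀ B : Set X, MeasurableSet B → ∀ ε : ENNReal, 0 < ε →
    ∃ C U : Set X, IsCompact C ∧ IsOpen U ∧ C ⊆ B ∧ B ⊆ U ∧ μ (U \ C) < ε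

/-- A family `F` of functions is dense in `L^α(μ)` (`0 < α < ∞`). -/
def DenseInLp {X : Type*} [MeasurableSpace X] (μ : Measure X) (α : ℝ)
    (F : Set (X → ℂ)) : Prop :=
  ∀ g : X → ℂ, Measurable g → (∫⁻ x, (‖g x‖₊ : ENNReal) ^ α ∂μ) < ⊤ →
    ∀ ε : ENNReal, 0 < ε → ∃ p ∈ F, (∫⁻ x, (‖g x - p x‖₊ : ENNReal) ^ α ∂μ) < ε

open scoped NNReal ENNReal Topology

/-!
Approximating the indicator of a Borel set `B` by a constant `c` costs
`|1 - c|^α μ(B) + |c|^α μ(Bᶜ)`, and one of `|1 - c|`, `|c|` is at least `1/2`; so density of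
the constants forces `μ(B) = 0` or `μ(Bᶜ) = 0` for every Borel `B`. Take `γ` in the support of
`μ`. If `μ({γ}ᶜ) > 0`, inner regularity gives a compact `K ⊆ {γ}ᶜ` of positive measure, so
`μ(Kᶜ) = 0`; but `Kᶜ` is an open neighbourhood of `γ`. Hence `μ` is concentrated at `γ`, which
then lies in the coset carrying `μ`.
-/

lemma Complex.two_inv_le_nnnorm_one_sub_or_nnnorm (c : ℂ) :
    (2⁻¹ : ℝ≥0∞) ≤ ‖1 - c‖₊ ∨ (2⁻¹ : ℝ≥0∞) ≤ ‖c‖₊ := by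
  by_contra! h
  refine lt_irrefl (1 : ℝ≥0∞) ?_
  calc (1 : ℝ≥0∞) = ‖(1 - c) + c‖₊ := by simp
    _ ≤ ‖1 - c‖₊ + ‖c‖₊ := by exact_mod_cast nnnorm_add_le _ _
    _ < 2⁻¹ + 2⁻¹ := ENNReal.add_lt_add h.1 h.2
    _ = 1 := ENNReal.inv_two_add_inv_two

namespace MeasureTheory

variable {X : Type*} [MeasurableSpace X] {μ : Measure X}

lemma lintegral_nnnorm_indicator_sub_const_rpow {B : Set X} (hB : MeasurableSet B) (c : ℂ)
    (α : ℝ) :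
    ∫⁻ x, (‖B.indicator 1 x - c‖₊ : ℝ≥0∞) ^ α ∂μ =
      (‖1 - c‖₊ : ℝ≥0∞) ^ α * μ B + (‖c‖₊ : ℝ≥0∞) ^ α * μ Bᶜ := by
  rw [← lintegral_add_compl _ hB, ← setLIntegral_const, ← setLIntegral_const]
  congr 1
  · exact setLIntegral_congr_fun hB fun x hx => by simp [hx]
  · exact setLIntegral_congr_fun hB.compl fun x hx => by simp [show x ∉ B from hx]

lemma DenseInLp.measure_eq_zero_or_measure_compl_eq_zero [IsFiniteMeasure μ] {α : ℝ}
    (hα : 0 < α) (hdense : DenseInLp μ α {p : X → ℂ | ∃ c : ℂ, p = fun _ => c})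
    {B : Set X} (hB : MeasurableSet B) : μ B = 0 ∨ μ Bᶜ = 0 := by
  by_contra! hpos
  have hfinite : ∫⁻ x, (‖B.indicator (1 : X → ℂ) x‖₊ : ℝ≥0∞) ^ α ∂μ < ⊤ := by
    have h := lintegral_nnnorm_indicator_sub_const_rpow (μ := μ) hB 0 α
    simp only [sub_zero] at h
    simp [h, ENNReal.zero_rpow_of_pos hα, measure_lt_top]
  set ε : ℝ≥0∞ := (2⁻¹ : ℝ≥0∞) ^ α * min (μ B) (μ Bᶜ)
  have hε : 0 < ε :=
    ENNReal.mul_pos (ENNReal.rpow_pos (by simp) (by simp)).ne' (by simp [hpos.1, hpos.2])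
  obtain ⟨_, ⟨c, rfl⟩, hc⟩ := hdense _ (measurable_const.indicator hB) hfinite ε hε
  refine hc.not_ge ?_
  change ε ≤ ∫⁻ x, (‖B.indicator 1 x - c‖₊ : ℝ≥0∞) ^ α ∂μ
  rw [lintegral_nnnorm_indicator_sub_const_rpow hB]
  rcases c.two_inv_le_nnnorm_one_sub_or_nnnorm with h | h
  · exact le_add_right (mul_le_mul' (ENNReal.rpow_le_rpow h hα.le) (min_le_left _ _))
  · exact le_add_left (mul_le_mul' (ENNReal.rpow_le_rpow h hα.le) (min_le_right _ _))

lemma Measure.eq_smul_dirac_of_measure_compl_singleton_eq_zero [MeasurableSingletonClass X]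
    {γ : X} (h : μ {γ}ᶜ = 0) : μ = μ {γ} • Measure.dirac γ := by
  rw [← Measure.restrict_singleton]
  exact (Measure.restrict_eq_self_of_ae_mem h).symm

section Topological

variable [TopologicalSpace X]

lemma PaperRegular.innerRegular (hμ : PaperRegular μ) : μ.InnerRegular := by
  refine ⟨fun B hB r hr => ?_⟩
  obtain ⟨K, U, hK, -, hKB, hBU, hUK⟩ := hμ B hB (μ B - r) (tsub_pos_of_lt hr)
  refine ⟨K, hKB, hK, lt_of_not_ge fun hKr => lt_irrefl (μ B) ?_⟩
  calc μ B ≤ μ (K ∪ U \ K) :=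
        measure_mono (hBU.trans (subset_union_right.trans_eq union_sdiff_self.symm))
    _ ≤ μ K + μ (U \ K) := measure_union_le _ _
    _ < r + (μ B - r) :=
        ENNReal.add_lt_add_of_le_of_lt (ne_top_of_le_ne_top hr.ne_top hKr) hKr hUK
    _ = μ B := add_tsub_cancel_of_le hr.le

variable [OpensMeasurableSpace X] [μ.InnerRegular]

lemma Measure.nonempty_support_of_innerRegular (hμ : μ ≠ 0) : μ.support.Nonempty := by
  by_contra h
  rw [not_nonempty_iff_eq_empty] at h
  apply hμ
  rw [← Measure.measure_univ_eq_zero, ← compl_empty, ← h]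
  exact Measure.measure_compl_support_of_innerRegular

lemma Measure.measure_compl_singleton_eq_zero_of_mem_support [T2Space X]
    (h01 : ∀ B, MeasurableSet B → μ B = 0 ∨ μ Bᶜ = 0) {γ : X} (hγ : γ ∈ μ.support) :
    μ {γ}ᶜ = 0 := by
  by_contra hne
  obtain ⟨K, hKγ, hK, hKpos⟩ :=
    isClosed_singleton.isOpen_compl.measurableSet.exists_lt_isCompact (pos_iff_ne_zero.2 hne)
  have hKc : μ Kᶜ = 0 := (h01 K hK.isClosed.measurableSet).resolve_left hKpos.ne'
  have hγK : Kᶜ ∈ 𝓝 γ := hK.isClosed.isOpen_compl.mem_nhds fun h => hKγ h rfl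
  exact ((Measure.mem_support_iff_forall γ).1 hγ Kᶜ hγK).ne' hKc

end Topological

end MeasureTheory

theorem dense_constants_implies_dirac_general
    {Γ : Type*} [AddCommGroup Γ] [TopologicalSpace Γ] [T2Space Γ]
    [MeasurableSpace Γ] [BorelSpace Γ]
    (Λ : AddSubgroup Γ) (q : Γ ⧸ Λ)
    (μ : Measure Γ) [IsFiniteMeasure μ] (hreg : PaperRegular μ)
    (hsupp : μ ((QuotientAddGroup.mk (s := Λ) ⁻¹' {q})ᶜ) = 0)
    (α : ℝ) (hα : 0 < α)
    (hdense : DenseInLp μ α {p : Γ → ℂ | ∃ c : ℂ, p = fun _ => c}) :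
    ∃ (c : ENNReal) (γ : Γ), QuotientAddGroup.mk (s := Λ) γ = q ∧
      μ = c • Measure.dirac γ := by
  have := hreg.innerRegular
  have h01 : ∀ B, MeasurableSet B → μ B = 0 ∨ μ Bᶜ = 0 := fun _ hB =>
    hdense.measure_eq_zero_or_measure_compl_eq_zero hα hB
  by_cases hμ : μ = 0
  · exact ⟨0, q.out, QuotientAddGroup.out_eq' q, by simp [hμ]⟩
  obtain ⟨γ, hγ⟩ := Measure.nonempty_support_of_innerRegular hμ
  have hμγ : μ = μ {γ} • Measure.dirac γ :=
    Measure.eq_smul_dirac_of_measure_compl_singleton_eq_zero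
      (Measure.measure_compl_singleton_eq_zero_of_mem_support h01 hγ)
  have hγpos : μ {γ} ≠ 0 := fun h => hμ (by rw [hμγ, h, zero_smul])
  refine ⟨μ {γ}, γ, ?_, hμγ⟩
  by_contra hne
  exact hγpos (measure_mono_null (singleton_subset_iff.2 hne) hsupp)

/-- if μ is a regular finite Borel measure concentrated on a single coset of a
closed subgroup Λ and the constant functions are dense in L^α(μ) for some α ∈ (0,∞), then μ
is a non-negative multiple of a Dirac measure at a point of that coset. -/
theorem dense_constants_implies_dirac
    {Γ : Type*} [AddCommGroup Γ] [TopologicalSpace Γ] [IsTopologicalAddGroup Γ] [T2Space Γ]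
    [MeasurableSpace Γ] [BorelSpace Γ]
    (Λ : AddSubgroup Γ) (hΛ : IsClosed (Λ : Set Γ)) (q : Γ ⧸ Λ)
    (μ : Measure Γ) [IsFiniteMeasure μ] (hreg : PaperRegular μ)
    (hsupp : μ ((QuotientAddGroup.mk (s := Λ) ⁻¹' {q})ᶜ) = 0)
    (α : ℝ) (hα : 0 < α)
    (hdense : DenseInLp μ α {p : Γ → ℂ | ∃ c : ℂ, p = fun _ => c}) :
    ∃ (c : ENNReal) (γ : Γ), QuotientAddGroup.mk (s := Λ) γ = q ∧
      μ = c • Measure.dirac γ :=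
  dense_constants_implies_dirac_general Λ q μ hreg hsupp α hα hdense
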